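/- arXiv:1007.0346 — 5 statements merged into one kernel-verified Lean document; each statement's English description precedes it below -/
import Mathlib

section
/- If G is an abelian group, φ an endomorphism of G, and N a finite-index subgroup of G, then for every positive integer n the group B_n(φ,N) has finite index in G, and the sequence α_n = |B_n(φ,N)/B_{n+1}(φ,N)| is eventually constant; in particular the limit H*(φ,N) = lim_{n→∞} (log|G/B_n(φ,N)|)/n exists and is finite. -/
/-! The index `|G / B_n|` is the product of the successive indices `α_i = |B_i / B_{i+1}|`, and
`φ` induces an injection `B_{n+1} / B_{n+2} → B_n / B_{n+1}`, so `α` is an antitone sequence of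
positive integers. Hence it is eventually constant, equal to some `c`, and `log |G / B_n| / n` is a
Cesàro mean of `log α_i`, which converges to `log c`. -/

open Filter Topology ENNReal

variable {G : Type*} [AddCommGroup G]

/-- `B_n(φ,N) = N ∩ φ⁻¹(N) ∩ … ∩ φ^{-(n-1)}(N)`. -/
noncomputable def Bsub (φ : AddMonoid.End G) (N : AddSubgroup G) (n : ℕ) : AddSubgroup G :=
  ⨅ i ∈ Finset.range n, N.comap (φ ^ i : AddMonoid.End G)

theorem AddSubgroup.finiteIndex_comap {A B : Type*} [AddGroup A] [AddGroup B] {H : AddSubgroup B}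
    [H.FiniteIndex] (f : A →+ B) : (H.comap f).FiniteIndex :=
  ⟨by simpa using relIndex_comap_ne_zero f (K := ⊤) (by simpa using FiniteIndex.index_ne_zero)⟩

section Bsub

variable (φ : AddMonoid.End G) (N : AddSubgroup G)

lemma mem_Bsub {n : ℕ} {x : G} : x ∈ Bsub φ N n ↔ ∀ i < n, (φ ^ i) x ∈ N := by
  simp only [Bsub, AddSubgroup.mem_iInf, Finset.mem_range]
  rfl

lemma Bsub_zero : Bsub φ N 0 = ⊤ := by
  ext x
  simp [mem_Bsub]

lemma Bsub_succ (n : ℕ) : Bsub φ N (n + 1) = N ⊓ (Bsub φ N n).comap (φ : G →+ G) := by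
  ext x
  rw [AddSubgroup.mem_inf, mem_Bsub, Nat.forall_lt_succ_left]
  exact and_congr Iff.rfl (mem_Bsub φ N).symm

lemma Bsub_succ_le (n : ℕ) : Bsub φ N (n + 1) ≤ Bsub φ N n := fun _ hx =>
  (mem_Bsub φ N).2 fun i hi => (mem_Bsub φ N).1 hx i (by omega)

lemma Bsub_le_self (n : ℕ) : Bsub φ N (n + 1) ≤ N := by
  rw [Bsub_succ]
  exact inf_le_left

lemma map_Bsub_succ_le (n : ℕ) : (Bsub φ N (n + 1)).map (φ : G →+ G) ≤ Bsub φ N n := by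
  refine AddSubgroup.map_le_iff_le_comap.2 ?_
  rw [Bsub_succ]
  exact inf_le_right

variable [N.FiniteIndex]

lemma Bsub_finiteIndex (n : ℕ) : (Bsub φ N n).FiniteIndex := by
  induction n with
  | zero => rw [Bsub_zero]; infer_instance
  | succ n ih =>
    have := AddSubgroup.finiteIndex_comap (H := Bsub φ N n) φ
    rw [Bsub_succ]
    infer_instance

lemma relIndex_Bsub_succ_ne_zero (n : ℕ) : (Bsub φ N (n + 1)).relIndex (Bsub φ N n) ≠ 0 :=
  left_ne_zero_of_mul <| (AddSubgroup.relIndex_mul_index (Bsub_succ_le φ N n)).trans_ne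
    (Bsub_finiteIndex φ N (n + 1)).index_ne_zero

lemma relIndex_Bsub_succ_succ_le (n : ℕ) :
    (Bsub φ N (n + 2)).relIndex (Bsub φ N (n + 1)) ≤
      (Bsub φ N (n + 1)).relIndex (Bsub φ N n) :=
  calc (Bsub φ N (n + 2)).relIndex (Bsub φ N (n + 1))
      = ((Bsub φ N (n + 1)).comap (φ : G →+ G)).relIndex (Bsub φ N (n + 1)) := by
        rw [Bsub_succ φ N (n + 1), inf_comm, ← AddSubgroup.relIndex_inf_mul_relIndex,
          inf_of_le_right (Bsub_le_self φ N n), AddSubgroup.relIndex_eq_one.2 (Bsub_le_self φ N n),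
          mul_one]
    _ = (Bsub φ N (n + 1)).relIndex ((Bsub φ N (n + 1)).map (φ : G →+ G)) :=
        AddSubgroup.relIndex_comap _ _ _
    _ ≤ (Bsub φ N (n + 1)).relIndex (Bsub φ N n) :=
        AddSubgroup.relIndex_le_of_le_right (map_Bsub_succ_le φ N n)
          (relIndex_Bsub_succ_ne_zero φ N n)

lemma log_index_Bsub (n : ℕ) : Real.log (Bsub φ N n).index =
    ∑ i ∈ Finset.range n, Real.log ((Bsub φ N (i + 1)).relIndex (Bsub φ N i)) := by
  induction n with
  | zero => simp [Bsub_zero]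
  | succ n ih =>
    rw [Finset.sum_range_succ, ← ih, ← AddSubgroup.relIndex_mul_index (Bsub_succ_le φ N n),
      Nat.cast_mul, Real.log_mul (by exact_mod_cast relIndex_Bsub_succ_ne_zero φ N n)
        (by exact_mod_cast (Bsub_finiteIndex φ N n).index_ne_zero), add_comm]

end Bsub

theorem stmt1 (φ : AddMonoid.End G) (N : AddSubgroup G) (hN : N.FiniteIndex) :
    (∀ n : ℕ, 0 < n → (Bsub φ N n).FiniteIndex) ∧
    (∃ c : ℕ, ∀ᶠ n in atTop, (Bsub φ N (n + 1)).relIndex (Bsub φ N n) = c) ∧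
    ∃ ℓ : ℝ, Tendsto (fun n : ℕ => Real.log ((Bsub φ N n).index) / n) atTop (𝓝 ℓ) := by
  set α : ℕ → ℕ := fun n => (Bsub φ N (n + 1)).relIndex (Bsub φ N n)
  obtain ⟨n₀, hn₀⟩ := WellFoundedLT.antitone_chain_condition
    (antitone_nat_of_succ_le (relIndex_Bsub_succ_succ_le φ N) : Antitone α)
  have hα : ∀ᶠ n in atTop, α n = α n₀ := eventually_atTop.2 ⟨n₀, fun n hn => (hn₀ n hn).symm⟩
  refine ⟨fun n _ => Bsub_finiteIndex φ N n, ⟨α n₀, hα⟩, Real.log (α n₀), ?_⟩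
  have hlog : Tendsto (fun n => Real.log (α n)) atTop (𝓝 (Real.log (α n₀))) :=
    tendsto_const_nhds.congr' (hα.mono fun _ hn => by simp only [hn])
  refine hlog.cesaro.congr fun n => ?_
  rw [log_index_Bsub, div_eq_inv_mul]
end

section
/- Let (G,τ) be a topological abelian group, φ: (G,τ) → (G,τ) a continuous endomorphism and H a φ-invariant subgroup of G. Let φ̄ be the induced continuous endomorphism of G/H with the quotient topology τ_q. Then ent*_{τ_q}(φ̄) ≤ ent*_τ(φ). Moreover, for every τ_q-open finite-index subgroup N/H of G/H (with N ⊇ H open of finite index in G), H*(φ̄, N/H) = H*(φ, N). -/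
open Filter Topology ENNReal

variable {G : Type*} [AddCommGroup G]

/-- `H*(φ,N) = lim_n log|G/B_n(φ,N)|/n`. -/
noncomputable def Hstar (φ : AddMonoid.End G) (N : AddSubgroup G) : ℝ :=
  limUnder atTop fun n : ℕ => Real.log ((Bsub φ N n).index) / n

/-- The topological adjoint entropy: sup of `H*(φ,N)` over `τ`-open finite-index subgroups. -/
noncomputable def entStar (t : TopologicalSpace G) (φ : AddMonoid.End G) : ℝ≥0∞ :=
  ⨆ (N : AddSubgroup G) (_ : @IsOpen G t ↑N ∧ N.FiniteIndex), ENNReal.ofReal (Hstar φ N)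

/-! The quotient map `π : G → G ⧸ H` semiconjugates `φ` to `φ̄`, so taking preimages under `π`
commutes with forming `B_n` and preserves indices: `H*(φ̄, M) = H*(φ, π⁻¹ M)`. Since `π⁻¹` sends
open finite-index subgroups of `G ⧸ H` to open finite-index subgroups of `G`, both claims follow. -/

section Semiconj

variable {G' : Type*} [AddCommGroup G'] {φ : AddMonoid.End G} {ψ : AddMonoid.End G'}
  {π : G →+ G'}

theorem Bsub_comap (h : Function.Semiconj π φ ψ) (M : AddSubgroup G') (n : ℕ) :
    (Bsub ψ M n).comap π = Bsub φ (M.comap π) n := by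
  ext g
  simp only [Bsub, AddSubgroup.mem_comap, AddSubgroup.mem_iInf]
  refine forall₂_congr fun i _ => ?_
  change (ψ ^ i) (π g) ∈ M ↔ π ((φ ^ i) g) ∈ M
  rw [AddMonoid.End.coe_pow, AddMonoid.End.coe_pow, (h.iterate_right i).eq]

theorem Hstar_comap_of_surjective (h : Function.Semiconj π φ ψ) (hπ : Function.Surjective π)
    (M : AddSubgroup G') : Hstar φ (M.comap π) = Hstar ψ M := by
  simp only [Hstar, ← Bsub_comap h, AddSubgroup.index_comap_of_surjective _ hπ]

end Semiconj

theorem stmt6_general [TopologicalSpace G]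
    (φ : AddMonoid.End G)
    (H : AddSubgroup G) (hinv : H ≤ H.comap (φ : G →+ G)) :
    entStar (inferInstance : TopologicalSpace (G ⧸ H))
        (QuotientAddGroup.map H H (φ : G →+ G) hinv)
      ≤ entStar ‹TopologicalSpace G› φ ∧
    ∀ N : AddSubgroup G, IsOpen (N : Set G) → N.FiniteIndex → H ≤ N →
      Hstar (G := G ⧸ H) (QuotientAddGroup.map H H (φ : G →+ G) hinv)
          (N.map (QuotientAddGroup.mk' H))
        = Hstar φ N := by
  have hsemi : Function.Semiconj (QuotientAddGroup.mk' H) φ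
      (QuotientAddGroup.map H H (φ : G →+ G) hinv) := fun _ => rfl
  have hsurj := QuotientAddGroup.mk'_surjective H
  refine ⟨iSup₂_le fun M ⟨hMopen, hMfin⟩ => ?_, fun N _ _ hHN => ?_⟩
  · rw [← Hstar_comap_of_surjective hsemi hsurj]
    refine le_iSup₂_of_le (M.comap (QuotientAddGroup.mk' H))
      ⟨hMopen.preimage continuous_quot_mk, ?_⟩ le_rfl
    exact ⟨by rw [AddSubgroup.index_comap_of_surjective _ hsurj]; exact hMfin.index_ne_zero⟩
  · rw [← Hstar_comap_of_surjective hsemi hsurj, AddSubgroup.comap_map_eq_self]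
    rwa [QuotientAddGroup.ker_mk']

theorem stmt6 [TopologicalSpace G] [IsTopologicalAddGroup G]
    (φ : AddMonoid.End G) (hφ : Continuous φ)
    (H : AddSubgroup G) (hinv : H ≤ H.comap (φ : G →+ G)) :
    entStar (inferInstance : TopologicalSpace (G ⧸ H))
        (QuotientAddGroup.map H H (φ : G →+ G) hinv)
      ≤ entStar ‹TopologicalSpace G› φ ∧
    ∀ N : AddSubgroup G, IsOpen (N : Set G) → N.FiniteIndex → H ≤ N →
      Hstar (G := G ⧸ H) (QuotientAddGroup.map H H (φ : G →+ G) hinv)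
          (N.map (QuotientAddGroup.mk' H))
        = Hstar φ N :=
  stmt6_general φ H hinv
end

section
/- Let (G,τ) be a topological abelian group and H a dense subgroup of G. Then the map N ↦ N ∩ H is a bijection from the set of τ-open finite-index subgroups of G onto the set of open finite-index subgroups of H (in the subspace topology), with inverse M ↦ closure of M in G. -/
open Filter Topology ENNReal

/-!
An open subgroup `N` is closed, and so is every subgroup containing it; since `H` is dense this
forces `H ⊔ N = ⊤`, so `H` meets every coset of `N` and `[H : N ∩ H] = [G : N]`, while `N ∩ H` is
dense in the open set `N`. Conversely, an open subgroup `M` of `H` is `U ∩ H` with `U` open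
in `G`; its closure contains `U`, hence is an open subgroup, and it meets `H` in the closure of
`M` inside `H`, which is `M` again.
-/

namespace Subgroup

variable {G : Type*} [Group G] [TopologicalSpace G]

@[to_additive]
theorem sup_eq_top_of_dense_of_isOpen [SeparatelyContinuousMul G] {H N : Subgroup G}
    (hH : Dense (H : Set G)) (hN : IsOpen (N : Set G)) : H ⊔ N = ⊤ := by
  have hclosed : IsClosed ((H ⊔ N : Subgroup G) : Set G) :=
    isClosed_of_isOpen _ (isOpen_mono le_sup_right hN)
  refine eq_top_iff.mpr fun g _ => ?_
  exact closure_minimal (SetLike.coe_subset_coe.mpr le_sup_left) hclosed (hH g)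

@[to_additive]
theorem relIndex_eq_index_of_dense_of_isOpen [SeparatelyContinuousMul G] {H N : Subgroup G}
    [N.Normal] (hH : Dense (H : Set G)) (hN : IsOpen (N : Set G)) : N.relIndex H = N.index := by
  rw [← relIndex_sup_right, sup_eq_top_of_dense_of_isOpen hH hN, relIndex_top_right]

variable [IsTopologicalGroup G]

@[to_additive]
theorem topologicalClosure_inf_eq_of_dense_of_isOpen {H N : Subgroup G}
    (hH : Dense (H : Set G)) (hN : IsOpen (N : Set G)) : (N ⊓ H).topologicalClosure = N := by
  refine le_antisymm (topologicalClosure_minimal _ inf_le_left (isClosed_of_isOpen N hN)) ?_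
  rw [← SetLike.coe_subset_coe, topologicalClosure_coe]
  exact hH.open_subset_closure_inter hN

@[to_additive]
theorem subgroupOf_topologicalClosure_map_subtype {H : Subgroup G} {M : Subgroup H}
    (hM : IsClosed (M : Set H)) : (M.map H.subtype).topologicalClosure.subgroupOf H = M := by
  refine SetLike.coe_injective ?_
  rw [coe_subgroupOf, topologicalClosure_coe, coe_map, coe_subtype]
  exact (IsInducing.subtypeVal.closure_eq_preimage_closure_image _).symm.trans hM.closure_eq

@[to_additive]
theorem isOpen_topologicalClosure_map_subtype {H : Subgroup G} {M : Subgroup H}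
    (hH : Dense (H : Set G)) (hM : IsOpen (M : Set H)) :
    IsOpen ((M.map H.subtype).topologicalClosure : Set G) := by
  obtain ⟨U, hU, hUM⟩ := isOpen_induced_iff.mp hM
  have hU_sub : U ⊆ (M.map H.subtype).topologicalClosure := by
    rw [topologicalClosure_coe, coe_map, coe_subtype, ← hUM, Set.image_preimage_eq_inter_range,
      Subtype.range_coe_subtype, SetLike.setOfPred_mem_eq]
    exact hH.open_subset_closure_inter hU
  have hU_one : (1 : G) ∈ U := by
    have h : (1 : H) ∈ Subtype.val ⁻¹' U := hUM ▸ M.one_mem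
    exact h
  exact isOpen_of_mem_nhds _ (mem_of_superset (hU.mem_nhds hU_one) hU_sub)

end Subgroup

theorem stmt8 {G : Type*} [AddCommGroup G] [TopologicalSpace G] [IsTopologicalAddGroup G]
    (H : AddSubgroup G) (hd : Dense (H : Set G)) :
    (∀ N : AddSubgroup G, IsOpen (N : Set G) → N.FiniteIndex →
      (IsOpen ((N.addSubgroupOf H : AddSubgroup H) : Set H) ∧
        (N.addSubgroupOf H).FiniteIndex) ∧
      ((N.addSubgroupOf H).map H.subtype).topologicalClosure = N) ∧
    ∀ M : AddSubgroup H, IsOpen (M : Set H) → M.FiniteIndex →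
      (IsOpen (((M.map H.subtype).topologicalClosure : AddSubgroup G) : Set G) ∧
        (M.map H.subtype).topologicalClosure.FiniteIndex) ∧
      ((M.map H.subtype).topologicalClosure).addSubgroupOf H = M := by
  refine ⟨fun N hN hNfi => ⟨⟨hN.preimage continuous_subtype_val, ?_⟩, ?_⟩, fun M hM hMfi => ?_⟩
  · exact ⟨(AddSubgroup.relIndex_eq_index_of_dense_of_isOpen hd hN).trans_ne hNfi.index_ne_zero⟩
  · rw [AddSubgroup.addSubgroupOf_map_subtype,
      AddSubgroup.topologicalClosure_inf_eq_of_dense_of_isOpen hd hN]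
  · have hK := AddSubgroup.isOpen_topologicalClosure_map_subtype hd hM
    have hKH := AddSubgroup.addSubgroupOf_topologicalClosure_map_subtype
      (AddSubgroup.isClosed_of_isOpen M hM)
    refine ⟨⟨hK, ⟨?_⟩⟩, hKH⟩
    rw [← AddSubgroup.relIndex_eq_index_of_dense_of_isOpen hd hK, AddSubgroup.relIndex, hKH]
    exact hMfi.index_ne_zero
end

section
/- Let (G,τ) be a topological abelian group. Then G¹_τ, the intersection of all τ-open finite-index subgroups of G, equals the intersection of the kernels of all torsion elements of the group of continuous characters (G,τ)' = Hom_cont(G, ℝ/ℤ). -/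
/-!
A torsion character `χ` with `m • χ = 0` takes values in the finite `m`-torsion of `ℝ/ℤ`, so its
kernel has finite index, and it is open because `{0}` is relatively open in the finite range of `χ`.
Conversely, if `N` is an open subgroup of finite index, then `G ⧸ N` is finite and discrete, so every
character of `G ⧸ N` pulls back to a continuous torsion character of `G`; since the characters of an
abelian group separate its points, a point outside `N` lies outside the kernel of one of them.
-/

namespace AddCircle

variable {𝕜 : Type*} [DivisionRing 𝕜] [CharZero 𝕜]

noncomputable def ratCastHom : AddCircle (1 : ℚ) →+ AddCircle (1 : 𝕜) :=
  QuotientAddGroup.map _ _ (Rat.castHom 𝕜).toAddMonoidHom <| by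
    rintro q ⟨n, rfl⟩
    exact ⟨n, by simp⟩

@[simp]
lemma ratCastHom_coe (q : ℚ) :
    ratCastHom (q : AddCircle (1 : ℚ)) = ((q : 𝕜) : AddCircle (1 : 𝕜)) :=
  rfl

lemma ratCastHom_injective :
    Function.Injective (ratCastHom : AddCircle (1 : ℚ) →+ AddCircle (1 : 𝕜)) := by
  refine (injective_iff_map_eq_zero _).2 fun x hx => ?_
  induction x using QuotientAddGroup.induction_on with
  | H q =>
    rw [ratCastHom_coe, coe_eq_zero_iff] at hx
    obtain ⟨n, hn⟩ := hx
    rw [coe_eq_zero_iff]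
    exact ⟨n, by simp only [zsmul_eq_mul, mul_one] at hn ⊢; exact_mod_cast hn⟩

end AddCircle

lemma exists_addCircle_hom_apply_ne_zero {A : Type*} [AddCommGroup A] {a : A} (ha : a ≠ 0) :
    ∃ ψ : A →+ AddCircle (1 : ℝ), ψ a ≠ 0 := by
  obtain ⟨c, hc⟩ := CharacterModule.exists_character_apply_ne_zero_of_ne_zero ha
  exact ⟨AddCircle.ratCastHom.comp c, (map_ne_zero_iff _ AddCircle.ratCastHom_injective).2 hc⟩

namespace AddMonoidHom

lemma finite_range_of_nsmul_eq_zero {G 𝕜 : Type*} [AddGroup G] [AddCommGroup 𝕜] [LinearOrder 𝕜]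
    [IsOrderedAddMonoid 𝕜] {p : 𝕜} (χ : G →+ AddCircle p) {m : ℕ} (hm : 0 < m)
    (hmχ : m • χ = 0) : (Set.range χ).Finite :=
  (AddCircle.finite_torsion p hm).subset <| by
    rintro _ ⟨g, rfl⟩
    exact congr($hmχ g)

lemma card_nsmul_comp_eq_zero {G A H : Type*} [AddGroup G] [AddGroup A] [AddCommGroup H]
    (ψ : A →+ H) (f : G →+ A) : Nat.card A • ψ.comp f = 0 := by
  ext g
  rw [nsmul_apply, comp_apply, ← map_nsmul, card_nsmul_eq_zero', map_zero, zero_apply]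

variable {G H : Type*} [AddGroup G] [TopologicalSpace G] [AddGroup H] [TopologicalSpace H]

lemma isOpen_ker_of_finite_range [T1Space H] (χ : G →+ H) (hχ : Continuous χ)
    (hfin : (Set.range χ).Finite) : IsOpen (χ.ker : Set G) := by
  have hker : (χ.ker : Set G) = χ ⁻¹' (Set.range χ \ {0})ᶜ := by
    ext g
    simp
  rw [hker]
  exact hfin.sdiff.isClosed.isOpen_compl.preimage hχ

lemma continuous_comp_mk' [SeparatelyContinuousAdd G] {N : AddSubgroup G} [N.Normal]
    (hN : IsOpen (N : Set G)) (ψ : G ⧸ N →+ H) : Continuous (ψ.comp (QuotientAddGroup.mk' N)) :=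
  have := QuotientAddGroup.discreteTopology hN
  (continuous_of_discreteTopology (α := G ⧸ N)).comp continuous_quot_mk

end AddMonoidHom

theorem stmt13 {G : Type*} [AddCommGroup G] [TopologicalSpace G] [IsTopologicalAddGroup G] :
    (⨅ N ∈ {N : AddSubgroup G | IsOpen (N : Set G) ∧ N.FiniteIndex}, N)
      = ⨅ χ ∈ {χ : G →+ AddCircle (1 : ℝ) |
          Continuous χ ∧ ∃ m : ℕ, 0 < m ∧ m • χ = 0}, χ.ker := by
  apply le_antisymm
  · refine le_iInf₂ fun χ ⟨hχ, m, hm, hmχ⟩ => iInf₂_le χ.ker ?_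
    have hfin := χ.finite_range_of_nsmul_eq_zero hm hmχ
    have : Finite χ.range := hfin.to_subtype
    exact ⟨χ.isOpen_ker_of_finite_range hχ hfin, AddSubgroup.finiteIndex_ker χ⟩
  · refine le_iInf₂ fun N ⟨hNopen, _⟩ g hg => ?_
    by_contra hgN
    have : Finite (G ⧸ N) := AddSubgroup.finite_quotient_of_finiteIndex
    obtain ⟨ψ, hψ⟩ := exists_addCircle_hom_apply_ne_zero
      (a := (g : G ⧸ N)) ((QuotientAddGroup.eq_zero_iff g).not.2 hgN)
    have hψ_mem : ψ.comp (QuotientAddGroup.mk' N) ∈ {χ : G →+ AddCircle (1 : ℝ) |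
        Continuous χ ∧ ∃ m : ℕ, 0 < m ∧ m • χ = 0} :=
      ⟨ψ.continuous_comp_mk' hNopen, Nat.card (G ⧸ N), Nat.card_pos, ψ.card_nsmul_comp_eq_zero _⟩
    exact hψ (AddSubgroup.mem_iInf.1 (AddSubgroup.mem_iInf.1 hg _) hψ_mem)
end

section
/- Let (K,τ) be a totally disconnected compact abelian group and ψ: (K,τ) → (K,τ) a continuous endomorphism. Then ent*_τ(ψ) = h_top(ψ), i.e., the topological adjoint entropy of ψ equals its topological entropy. -/
open Filter Topology ENNReal

variable {G : Type*} [AddCommGroup G]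

/-- Minimal cardinality of a finite subcover of `U`. -/
noncomputable def covN {X : Type*} [TopologicalSpace X] (U : Set (Set X)) : ℕ :=
  sInf {n : ℕ | ∃ F : Finset (Set X), ↑F ⊆ U ∧ ⋃₀ (F : Set (Set X)) = Set.univ ∧ F.card = n}

/-- `covTraj ψ U n = U ∨ ψ⁻¹U ∨ … ∨ ψ⁻ⁿU`. -/
def covTraj {X : Type*} (ψ : X → X) (U : Set (Set X)) : ℕ → Set (Set X)
  | 0 => U
  | n + 1 => Set.image2 (· ∩ ·) U ((fun s => ψ ⁻¹' s) '' covTraj ψ U n)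

/-- Topological entropy of `ψ` with respect to the cover `U`. -/
noncomputable def Htop {X : Type*} [TopologicalSpace X] (ψ : X → X) (U : Set (Set X)) : ℝ :=
  limUnder atTop fun n : ℕ => Real.log (covN (covTraj ψ U n)) / (n + 1)

/-- The Adler–Konheim–McAndrew topological entropy. -/
noncomputable def htop {X : Type*} [TopologicalSpace X] (ψ : X → X) : ℝ≥0∞ :=
  ⨆ (U : Set (Set X)) (_ : (∀ s ∈ U, IsOpen s) ∧ ⋃₀ U = Set.univ),
    ENNReal.ofReal (Htop ψ U)


/-!
Every open cover of `K` is refined by the coset partition `ζ(N)` of some open subgroup `N`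
(Lebesgue number lemma for the group uniformity, together with the fact that the open subgroups
of a profinite group form a basis at `0`), and `H_top(ψ, ·)` is monotone under refinement, so
`h_top(ψ)` is the supremum of `H_top(ψ, ζ(N))`. The join `ζ(N) ∨ ψ⁻¹ζ(N) ∨ ⋯ ∨ ψ⁻ⁿζ(N)` is the
partition into the fibres of the homomorphism `x ↦ (x + N, ψ x + N, …, ψⁿ x + N)`, whose kernel is
`B_{n+1}(ψ, N)`; a partition into nonempty sets has no proper subcover, so this join needs exactly
`[K : B_{n+1}(ψ, N)]` members and `H_top(ψ, ζ(N)) = H*(ψ, N)`. Fekete's lemma shows that all the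
limits involved exist, so the `limUnder`s in the definitions are genuine limits.
-/

section Covers

variable {X : Type*} {U V : Set (Set X)}

def HasFiniteSubcover (U : Set (Set X)) : Prop :=
  ∃ F : Finset (Set X), ↑F ⊆ U ∧ ⋃₀ (F : Set (Set X)) = Set.univ

lemma sUnion_image_preimage_eq_univ (f : X → X) (hV : ⋃₀ V = Set.univ) :
    ⋃₀ ((f ⁻¹' ·) '' V) = Set.univ := by
  rw [Set.sUnion_image, ← Set.preimage_sUnion, hV, Set.preimage_univ]

lemma sUnion_image2_inter_eq_univ (hU : ⋃₀ U = Set.univ) (hV : ⋃₀ V = Set.univ) :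
    ⋃₀ Set.image2 (· ∩ ·) U V = Set.univ := by
  refine Set.eq_univ_of_forall fun x => ?_
  obtain ⟨u, hu, hxu⟩ := Set.mem_sUnion.1 (hU ▸ Set.mem_univ x)
  obtain ⟨v, hv, hxv⟩ := Set.mem_sUnion.1 (hV ▸ Set.mem_univ x)
  exact ⟨u ∩ v, Set.mem_image2_of_mem hu hv, hxu, hxv⟩

lemma HasFiniteSubcover.image_preimage (hV : HasFiniteSubcover V) (f : X → X) :
    HasFiniteSubcover ((f ⁻¹' ·) '' V) := by
  classical
  obtain ⟨F, hFV, hF⟩ := hV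
  exact ⟨F.image (f ⁻¹' ·), by rw [Finset.coe_image]; exact Set.image_mono hFV,
    by rw [Finset.coe_image]; exact sUnion_image_preimage_eq_univ f hF⟩

variable [TopologicalSpace X]

lemma covN_le_card {F : Finset (Set X)} (hFU : ↑F ⊆ U) (hF : ⋃₀ (F : Set (Set X)) = Set.univ) :
    covN U ≤ F.card :=
  Nat.sInf_le ⟨F, hFU, hF, rfl⟩

lemma HasFiniteSubcover.exists_card_eq_covN (hU : HasFiniteSubcover U) :
    ∃ F : Finset (Set X), ↑F ⊆ U ∧ ⋃₀ (F : Set (Set X)) = Set.univ ∧ F.card = covN U :=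
  let ⟨F, hFU, hF⟩ := hU
  Nat.sInf_mem (s := {n | ∃ F : Finset (Set X), (F : Set (Set X)) ⊆ U ∧
    ⋃₀ (F : Set (Set X)) = Set.univ ∧ F.card = n}) ⟨F.card, F, hFU, hF, rfl⟩

lemma hasFiniteSubcover_of_isOpen [CompactSpace X] (hU : ∀ s ∈ U, IsOpen s)
    (hc : ⋃₀ U = Set.univ) : HasFiniteSubcover U := by
  obtain ⟨F, hFU, hFfin, hF⟩ := isCompact_univ.elim_finite_subcover_image (b := U) (c := id) hU
    (by simp [← Set.sUnion_eq_biUnion, hc])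
  refine ⟨hFfin.toFinset, by simpa using hFU, Set.univ_subset_iff.1 ?_⟩
  simpa [Set.sUnion_eq_biUnion] using hF

lemma covN_image_preimage_le (hV : HasFiniteSubcover V) (f : X → X) :
    covN ((f ⁻¹' ·) '' V) ≤ covN V := by
  classical
  obtain ⟨F, hFV, hF, hcard⟩ := hV.exists_card_eq_covN
  refine hcard ▸ (covN_le_card (F := F.image (f ⁻¹' ·)) ?_ ?_).trans Finset.card_image_le
  · rw [Finset.coe_image]; exact Set.image_mono hFV
  · rw [Finset.coe_image]; exact sUnion_image_preimage_eq_univ f hF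

lemma covN_image2_inter_le (hU : HasFiniteSubcover U) (hV : HasFiniteSubcover V) :
    covN (Set.image2 (· ∩ ·) U V) ≤ covN U * covN V := by
  classical
  obtain ⟨F, hFU, hF, hFcard⟩ := hU.exists_card_eq_covN
  obtain ⟨G, hGV, hG, hGcard⟩ := hV.exists_card_eq_covN
  rw [← hFcard, ← hGcard]
  refine (covN_le_card (F := Finset.image₂ (· ∩ ·) F G) ?_ ?_).trans (Finset.card_image₂_le _ _ _)
  · rw [Finset.coe_image₂]; exact Set.image2_subset hFU hGV
  · rw [Finset.coe_image₂]; exact sUnion_image2_inter_eq_univ hF hG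

lemma covN_le_of_refines (hV : HasFiniteSubcover V) (h : ∀ v ∈ V, ∃ u ∈ U, v ⊆ u) :
    covN U ≤ covN V := by
  classical
  obtain ⟨F, hFV, hF, hcard⟩ := hV.exists_card_eq_covN
  choose! g hgU hg using h
  refine hcard ▸ (covN_le_card (F := F.image g) ?_ ?_).trans Finset.card_image_le
  · rw [Finset.coe_image]; exact Set.image_subset_iff.2 fun v hv => hgU v (hFV hv)
  · refine Set.eq_univ_of_forall fun x => ?_
    obtain ⟨v, hv, hxv⟩ := Set.mem_sUnion.1 (hF ▸ Set.mem_univ x)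
    exact ⟨g v, Finset.mem_coe.2 (Finset.mem_image_of_mem g hv), hg v (hFV hv) hxv⟩

end Covers

section Traj

variable {X : Type*} {ψ : X → X} {U V : Set (Set X)}

lemma sUnion_covTraj (hU : ⋃₀ U = Set.univ) (n : ℕ) : ⋃₀ covTraj ψ U n = Set.univ := by
  induction n with
  | zero => exact hU
  | succ n ih => exact sUnion_image2_inter_eq_univ hU (sUnion_image_preimage_eq_univ ψ ih)

lemma covTraj_refines (h : ∀ v ∈ V, ∃ u ∈ U, v ⊆ u) (n : ℕ) :
    ∀ v ∈ covTraj ψ V n, ∃ u ∈ covTraj ψ U n, v ⊆ u := by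
  induction n with
  | zero => exact h
  | succ n ih =>
    rintro _ ⟨v, hv, _, ⟨t, ht, rfl⟩, rfl⟩
    obtain ⟨u, hu, hvu⟩ := h v hv
    obtain ⟨w, hw, htw⟩ := ih t ht
    exact ⟨u ∩ ψ ⁻¹' w, Set.mem_image2_of_mem hu ⟨w, hw, rfl⟩,
      Set.inter_subset_inter hvu (Set.preimage_mono htw)⟩

lemma covTraj_add (m n : ℕ) : covTraj ψ U (m + n + 1) =
    Set.image2 (· ∩ ·) (covTraj ψ U m) ((ψ^[m + 1] ⁻¹' ·) '' covTraj ψ U n) := by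
  induction m with
  | zero => simp [covTraj]
  | succ m ih =>
    rw [show m + 1 + n + 1 = m + n + 1 + 1 by omega, covTraj, ih,
      Set.image_image2_distrib (g₁ := (ψ ⁻¹' ·)) (g₂ := (ψ ⁻¹' ·)) (f' := (· ∩ ·))
        fun _ _ => Set.preimage_inter,
      ← Set.image2_assoc fun a b c => Set.inter_assoc a b c, covTraj, ← Set.image_comp]
    rfl

variable [TopologicalSpace X]

lemma isOpen_of_mem_covTraj (hψ : Continuous ψ) (hU : ∀ s ∈ U, IsOpen s) (n : ℕ) :
    ∀ s ∈ covTraj ψ U n, IsOpen s := by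
  induction n with
  | zero => exact hU
  | succ n ih =>
    rintro _ ⟨u, hu, _, ⟨t, ht, rfl⟩, rfl⟩
    exact (hU u hu).inter ((ih t ht).preimage hψ)

lemma hasFiniteSubcover_covTraj [CompactSpace X] (hψ : Continuous ψ) (hU : ∀ s ∈ U, IsOpen s)
    (hc : ⋃₀ U = Set.univ) (n : ℕ) : HasFiniteSubcover (covTraj ψ U n) :=
  hasFiniteSubcover_of_isOpen (isOpen_of_mem_covTraj hψ hU n) (sUnion_covTraj hc n)

lemma covN_covTraj_add_le (hU : ∀ n, HasFiniteSubcover (covTraj ψ U n)) (m n : ℕ) :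
    covN (covTraj ψ U (m + n + 1)) ≤ covN (covTraj ψ U m) * covN (covTraj ψ U n) := by
  rw [covTraj_add]
  exact (covN_image2_inter_le (hU m) ((hU n).image_preimage _)).trans
    (Nat.mul_le_mul_left _ (covN_image_preimage_le (hU n) _))

end Traj

lemma Real.log_natCast_le_add_of_le_mul {a b c : ℕ} (h : c ≤ a * b) :
    Real.log c ≤ Real.log a + Real.log b := by
  rcases Nat.eq_zero_or_pos a with rfl | ha
  · simp_all [Real.log_natCast_nonneg]
  rcases Nat.eq_zero_or_pos b with rfl | hb
  · simp_all [Real.log_natCast_nonneg]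
  rcases Nat.eq_zero_or_pos c with rfl | hc
  · simp [Real.log_natCast_nonneg, add_nonneg]
  rw [← Real.log_mul (by positivity) (by positivity)]
  exact Real.log_le_log (by positivity) (by exact_mod_cast h)

lemma Real.log_natCast_le_log_natCast {a b : ℕ} (h : a ≤ b) : Real.log a ≤ Real.log b := by
  rcases Nat.eq_zero_or_pos a with rfl | ha
  · simpa using Real.log_natCast_nonneg b
  exact Real.log_le_log (by positivity) (by exact_mod_cast h)

lemma exists_tendsto_div_succ_of_le_add {a : ℕ → ℝ} (h0 : ∀ n, 0 ≤ a n)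
    (h : ∀ m n, a (m + n + 1) ≤ a m + a n) :
    ∃ L, Tendsto (fun n : ℕ => a n / (n + 1)) atTop (𝓝 L) := by
  let u : ℕ → ℝ := fun
    | 0 => 0
    | n + 1 => a n
  have hu : Subadditive u := by
    rintro (_ | m) (_ | n)
    · simp [u]
    · simp [u]
    · simp [u]
    · show u (m + 1 + (n + 1)) ≤ u (m + 1) + u (n + 1)
      rw [show m + 1 + (n + 1) = m + n + 1 + 1 by omega]
      exact h m n
  have hbdd : BddBelow (Set.range fun n : ℕ => u n / n) := by
    refine ⟨0, ?_⟩
    rintro _ ⟨_ | n, rfl⟩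
    · simp [u]
    · exact div_nonneg (h0 n) n.succ.cast_nonneg
  refine ⟨hu.lim, ((tendsto_add_atTop_iff_nat 1).2 (hu.tendsto_lim hbdd)).congr fun n => ?_⟩
  simp [u]

lemma tendsto_Htop {X : Type*} [TopologicalSpace X] {ψ : X → X} {U : Set (Set X)}
    (hU : ∀ n, HasFiniteSubcover (covTraj ψ U n)) :
    Tendsto (fun n : ℕ => Real.log (covN (covTraj ψ U n)) / (n + 1)) atTop (𝓝 (Htop ψ U)) := by
  obtain ⟨L, hL⟩ := exists_tendsto_div_succ_of_le_add
    (a := fun n => Real.log (covN (covTraj ψ U n))) (fun n => Real.log_natCast_nonneg _)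
    fun m n => Real.log_natCast_le_add_of_le_mul (covN_covTraj_add_le hU m n)
  rwa [Htop, hL.limUnder_eq]

lemma Htop_le_Htop_of_refines {X : Type*} [TopologicalSpace X] [CompactSpace X] {ψ : X → X}
    (hψ : Continuous ψ) {U V : Set (Set X)} (hUo : ∀ s ∈ U, IsOpen s) (hU : ⋃₀ U = Set.univ)
    (hVo : ∀ s ∈ V, IsOpen s) (hV : ⋃₀ V = Set.univ) (h : ∀ v ∈ V, ∃ u ∈ U, v ⊆ u) :
    Htop ψ U ≤ Htop ψ V := by
  have hUfin := hasFiniteSubcover_covTraj hψ hUo hU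
  have hVfin := hasFiniteSubcover_covTraj hψ hVo hV
  refine le_of_tendsto_of_tendsto' (tendsto_Htop hUfin) (tendsto_Htop hVfin) fun n => ?_
  exact div_le_div_of_nonneg_right
    (Real.log_natCast_le_log_natCast (covN_le_of_refines (hVfin n) (covTraj_refines h n)))
    n.cast_add_one_pos.le

section Fibers

variable {X Y : Type*}

def fiberCover (f : X → Y) : Set (Set X) := Set.range fun y => f ⁻¹' {y}

lemma sUnion_image_preimage_singleton_range (f : X → Y) :
    ⋃₀ ((fun y => f ⁻¹' {y}) '' Set.range f) = Set.univ :=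
  Set.eq_univ_of_forall fun x => ⟨f ⁻¹' {f x}, ⟨f x, ⟨x, rfl⟩, rfl⟩, rfl⟩

lemma sUnion_fiberCover (f : X → Y) : ⋃₀ fiberCover f = Set.univ :=
  Set.eq_univ_of_forall fun x => ⟨f ⁻¹' {f x}, ⟨f x, rfl⟩, rfl⟩

def itinerary (ψ : X → X) (f : X → Y) (n : ℕ) (x : X) : Fin n → Y := fun i => f (ψ^[i] x)

lemma itinerary_succ (ψ : X → X) (f : X → Y) (n : ℕ) (x : X) :
    itinerary ψ f (n + 1) x = Fin.cons (f x) (itinerary ψ f n (ψ x)) := by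
  funext i
  refine Fin.cases rfl (fun i => ?_) i
  simp [itinerary, Function.iterate_succ_apply]

lemma preimage_inter_preimage_itinerary (ψ : X → X) (f : X → Y) {n : ℕ} (y : Y) (c : Fin n → Y) :
    f ⁻¹' {y} ∩ ψ ⁻¹' (itinerary ψ f n ⁻¹' {c}) = itinerary ψ f (n + 1) ⁻¹' {Fin.cons y c} := by
  ext x
  simp [itinerary_succ, Fin.cons_inj]

lemma covTraj_fiberCover (ψ : X → X) (f : X → Y) (n : ℕ) :
    covTraj ψ (fiberCover f) n = fiberCover (itinerary ψ f (n + 1)) := by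
  induction n with
  | zero =>
    have hfib : ∀ c : Fin 1 → Y, itinerary ψ f 1 ⁻¹' {c} = f ⁻¹' {c 0} := fun c => by
      ext x; simp [itinerary, funext_iff, Fin.forall_fin_one]
    simp only [covTraj, fiberCover, hfib]
    exact ((Equiv.funUnique (Fin 1) Y).surjective.range_comp _).symm
  | succ n ih =>
    ext s
    rw [covTraj, ih]
    constructor
    · rintro ⟨_, ⟨y, rfl⟩, _, ⟨_, ⟨c, rfl⟩, rfl⟩, rfl⟩
      exact ⟨Fin.cons y c, (preimage_inter_preimage_itinerary ψ f y c).symm⟩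
    · rintro ⟨c, rfl⟩
      show itinerary ψ f (n + 2) ⁻¹' {c} ∈ _
      rw [← Fin.cons_self_tail c, ← preimage_inter_preimage_itinerary]
      exact Set.mem_image2_of_mem ⟨_, rfl⟩ ⟨_, ⟨_, rfl⟩, rfl⟩

lemma hasFiniteSubcover_fiberCover (f : X → Y) [Finite (Set.range f)] :
    HasFiniteSubcover (fiberCover f) :=
  ⟨(Set.toFinite ((fun y => f ⁻¹' {y}) '' Set.range f)).toFinset,
    by rw [Set.Finite.coe_toFinset]; exact Set.image_subset_range _ _,
    by rw [Set.Finite.coe_toFinset]; exact sUnion_image_preimage_singleton_range f⟩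

variable [TopologicalSpace X]

/-- A subcover of a partition into fibres has to use every nonempty fibre. -/
lemma covN_fiberCover (f : X → Y) [Finite (Set.range f)] :
    covN (fiberCover f) = (Set.range f).ncard := by
  have hinj : Set.InjOn (fun y => f ⁻¹' {y}) (Set.range f) := by
    rintro _ ⟨x, rfl⟩ _ _ h
    exact (Set.ext_iff.1 h x).1 rfl
  obtain ⟨F, hFU, hF, hcard⟩ := (hasFiniteSubcover_fiberCover f).exists_card_eq_covN
  refine le_antisymm ?_ ?_
  · rw [← hinj.ncard_image, Set.ncard_eq_toFinset_card _ (Set.toFinite _)]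
    exact covN_le_card (by rw [Set.Finite.coe_toFinset]; exact Set.image_subset_range _ _)
      (by rw [Set.Finite.coe_toFinset]; exact sUnion_image_preimage_singleton_range f)
  · rw [← hcard, ← Set.ncard_coe_finset, ← hinj.ncard_image]
    refine Set.ncard_le_ncard ?_ F.finite_toSet
    rintro _ ⟨_, ⟨x, rfl⟩, rfl⟩
    obtain ⟨_, hsF, hxs⟩ := Set.mem_sUnion.1 (hF ▸ Set.mem_univ x)
    obtain ⟨y, rfl⟩ := hFU hsF
    obtain rfl : f x = y := hxs
    exact hsF

end Fibers

section Groups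

variable {G : Type*} [AddCommGroup G]

lemma index_Bsub (φ : AddMonoid.End G) (N : AddSubgroup G) (n : ℕ) :
    (Bsub φ N n).index = (Set.range (itinerary φ (QuotientAddGroup.mk : G → G ⧸ N) n)).ncard := by
  let f : G →+ (Fin n → G ⧸ N) :=
    AddMonoidHom.pi fun i => (QuotientAddGroup.mk' N).comp (φ ^ (i : ℕ))
  have hf : ⇑f = itinerary φ QuotientAddGroup.mk n := by
    funext x i
    show QuotientAddGroup.mk ((φ ^ (i : ℕ)) x) = _
    rw [AddMonoid.End.coe_pow]
    rfl
  have hker : f.ker = Bsub φ N n := by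
    ext x
    simp only [AddMonoidHom.mem_ker, hf, itinerary, Bsub, funext_iff, Fin.forall_iff,
      Pi.zero_apply, QuotientAddGroup.eq_zero_iff, AddSubgroup.mem_iInf, Finset.mem_range]
    refine forall₂_congr fun i _ => ?_
    rw [← AddMonoid.End.coe_pow]
    rfl
  rw [← hker, AddSubgroup.index_ker, ← Nat.card_coe_set_eq, ← hf]
  rfl

lemma Hstar_eq_Htop_fiberCover [TopologicalSpace G] (φ : AddMonoid.End G) {N : AddSubgroup G}
    [N.FiniteIndex] : Hstar φ N = Htop φ (fiberCover (QuotientAddGroup.mk : G → G ⧸ N)) := by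
  set q : G → G ⧸ N := QuotientAddGroup.mk
  have hfin : ∀ n, HasFiniteSubcover (covTraj φ (fiberCover q) n) := fun n => by
    rw [covTraj_fiberCover]
    exact hasFiniteSubcover_fiberCover _
  have hcov : ∀ n, covN (covTraj φ (fiberCover q) n) = (Bsub φ N (n + 1)).index := fun n => by
    rw [covTraj_fiberCover, covN_fiberCover, index_Bsub]
  have h := tendsto_Htop hfin
  simp only [hcov] at h
  refine Tendsto.limUnder_eq ((tendsto_add_atTop_iff_nat 1).1 ?_)
  simpa using h

end Groups

section Topological

variable {K : Type*} [AddCommGroup K] [TopologicalSpace K] [IsTopologicalAddGroup K]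

lemma isOpen_of_mem_fiberCover_mk {N : AddSubgroup K} (hN : IsOpen (N : Set K)) :
    ∀ s ∈ fiberCover (QuotientAddGroup.mk : K → K ⧸ N), IsOpen s := by
  have := QuotientAddGroup.discreteTopology hN
  rintro _ ⟨q, rfl⟩
  exact (isOpen_discrete {q}).preimage continuous_quot_mk

/-- Take a Lebesgue entourage of `U` for the group uniformity and an open subgroup inside it. -/
lemma exists_isOpen_addSubgroup_fiberCover_refines [CompactSpace K] [TotallyDisconnectedSpace K]
    {U : Set (Set K)} (hUo : ∀ s ∈ U, IsOpen s) (hU : ⋃₀ U = Set.univ) :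
    ∃ N : AddSubgroup K, IsOpen (N : Set K) ∧
      ∀ v ∈ fiberCover (QuotientAddGroup.mk : K → K ⧸ N), ∃ u ∈ U, v ⊆ u := by
  let _ := IsTopologicalAddGroup.rightUniformSpace K
  obtain ⟨V, hV, hball⟩ := lebesgue_number_lemma (U := fun u : U => (u : Set K)) isCompact_univ
    (fun u => hUo u u.2) (by rw [← Set.sUnion_eq_iUnion, hU])
  obtain ⟨W, hW, hWV⟩ := Filter.mem_comap.1 hV
  obtain ⟨N, hN⟩ := ProfiniteGrp.exist_openNormalAddSubgroup_sub_open_nhds_of_zero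
    isOpen_interior (mem_interior_iff_mem_nhds.2 hW)
  refine ⟨N.toAddSubgroup, N.isOpen, ?_⟩
  rintro _ ⟨q, rfl⟩
  induction q using QuotientAddGroup.induction_on with | H x => ?_
  obtain ⟨⟨u, hu⟩, hxu⟩ := hball x (Set.mem_univ x)
  refine ⟨u, hu, fun y hy => hxu (hWV ?_)⟩
  have hxy : -x + y ∈ N := QuotientAddGroup.eq.1 hy.symm
  show y + -x ∈ W
  exact interior_subset (hN (by rwa [add_comm] at hxy))

end Topological

theorem stmt18 {K : Type*} [AddCommGroup K] [TopologicalSpace K] [IsTopologicalAddGroup K]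
    [CompactSpace K] [TotallyDisconnectedSpace K]
    (ψ : AddMonoid.End K) (hψ : Continuous ψ) :
    entStar ‹TopologicalSpace K› ψ = htop (⇑ψ) := by
  apply le_antisymm
  · refine iSup₂_le fun N ⟨hNo, hNf⟩ => ?_
    rw [Hstar_eq_Htop_fiberCover]
    exact le_iSup₂_of_le (fiberCover (QuotientAddGroup.mk : K → K ⧸ N))
      ⟨isOpen_of_mem_fiberCover_mk hNo, sUnion_fiberCover _⟩ le_rfl
  · refine iSup₂_le fun U ⟨hUo, hU⟩ => ?_
    obtain ⟨N, hNo, hrefines⟩ := exists_isOpen_addSubgroup_fiberCover_refines hUo hU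
    have := N.quotient_finite_of_isOpen hNo
    have hNf : N.FiniteIndex := N.finiteIndex_of_finite_quotient
    refine le_iSup₂_of_le N ⟨hNo, hNf⟩ ?_
    rw [Hstar_eq_Htop_fiberCover]
    exact ENNReal.ofReal_le_ofReal <| Htop_le_Htop_of_refines hψ hUo hU
      (isOpen_of_mem_fiberCover_mk hNo) (sUnion_fiberCover _) hrefines
end
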